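/- arXiv:2408.07771 — 2 statements merged into one kernel-verified Lean document; each statement's English description precedes it below -/
import Mathlib

section
/- Let k ≥ 2, let a_1, …, a_k be unit vectors in a real inner product space with ⟨a_i, a_j⟩ = -1/(k-1) for all i ≠ j, let n ≥ 1, let w : Fin n × Fin n → ℝ be a family of weights, and let σ : Fin n → Fin k be an assignment of the n points into k clusters. Then ∑_{i<j, σ(i) ≠ σ(j)} w_{ij} = ((k-1)/k) · ∑_{i<j} w_{ij} (1 - ⟨a_{σ(i)}, a_{σ(j)}⟩). In particular, the Max k-Cut problem of maximizing the left-hand side over all assignments σ is equivalent to maximizing the right-hand side over all choices y_i ∈ {a_1, …, a_k}. -/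
open scoped RealInnerProductSpace
open Finset

theorem sub_one_div_mul_one_sub_inner_eq_ite
    {E : Type*} [NormedAddCommGroup E] [InnerProductSpace ℝ E]
    {k : ℕ} {a : Fin k → E} (hunit : ∀ i, ‖a i‖ = 1)
    (hinner : ∀ i j, i ≠ j → ⟪a i, a j⟫ = -1 / ((k : ℝ) - 1)) (i j : Fin k) :
    ((k : ℝ) - 1) / k * (1 - ⟪a i, a j⟫) = if i = j then 0 else 1 := by
  split_ifs with hij
  · simp [hij, hunit]
  · have hk : (2 : ℝ) ≤ k := by
      have := Fin.val_ne_of_ne hij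
      exact_mod_cast (by omega : 2 ≤ k)
    have hk1 : (k : ℝ) - 1 ≠ 0 := by linarith
    rw [hinner i j hij]
    field_simp
    ring

theorem cut_eq_simplex_objective_general
    {E : Type*} [NormedAddCommGroup E] [InnerProductSpace ℝ E]
    (k : ℕ) (a : Fin k → E)
    (hunit : ∀ i, ‖a i‖ = 1)
    (hinner : ∀ i j, i ≠ j → ⟪a i, a j⟫ = -1 / ((k : ℝ) - 1))
    (n : ℕ) (w : Fin n × Fin n → ℝ) (σ : Fin n → Fin k) :
    ∑ p ∈ univ.filter (fun p : Fin n × Fin n => p.1 < p.2 ∧ σ p.1 ≠ σ p.2), w p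
      = (((k : ℝ) - 1) / k) *
        ∑ p ∈ univ.filter (fun p : Fin n × Fin n => p.1 < p.2),
          w p * (1 - ⟪a (σ p.1), a (σ p.2)⟫) := by
  rw [← filter_filter, sum_filter, mul_sum]
  refine sum_congr rfl fun p _ => ?_
  rw [mul_left_comm, sub_one_div_mul_one_sub_inner_eq_ite hunit hinner]
  by_cases h : σ p.1 = σ p.2 <;> simp [h]

/-- The cut value of an assignment `σ` equals the Max k-Cut objective evaluated at the
simplex vectors `y i = a (σ i)`; hence the Max k-Cut problem is equivalent to maximizing
the vector objective over choices `y i ∈ {a 1, …, a k}`. -/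
theorem cut_eq_simplex_objective
    {E : Type*} [NormedAddCommGroup E] [InnerProductSpace ℝ E]
    (k : ℕ) (hk : 2 ≤ k) (a : Fin k → E)
    (hunit : ∀ i, ‖a i‖ = 1)
    (hinner : ∀ i j, i ≠ j → ⟪a i, a j⟫ = -1 / ((k : ℝ) - 1))
    (n : ℕ) (hn : 1 ≤ n) (w : Fin n × Fin n → ℝ) (σ : Fin n → Fin k) :
    ∑ p ∈ univ.filter (fun p : Fin n × Fin n => p.1 < p.2 ∧ σ p.1 ≠ σ p.2), w p
      = (((k : ℝ) - 1) / k) *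
        ∑ p ∈ univ.filter (fun p : Fin n × Fin n => p.1 < p.2),
          w p * (1 - ⟪a (σ p.1), a (σ p.2)⟫) :=
  cut_eq_simplex_objective_general k a hunit hinner n w σ
end

section
/- Let k ≥ 2, n ≥ 1, let w : Fin n × Fin n → ℝ be weights, and let σ : Fin n → Fin k be any assignment. Then there exist unit vectors v_1, …, v_n in the Euclidean space ℝ^{k-1} with ⟨v_i, v_j⟩ ≥ -1/(k-1) for all i ≠ j such that ((k-1)/k) · ∑_{i<j} w_{ij} (1 - ⟨v_i, v_j⟩) = ∑_{i<j, σ(i) ≠ σ(j)} w_{ij}. Consequently, the cut value of every assignment is at most the supremum of the relaxed objective ((k-1)/k) ∑_{i<j} w_{ij}(1 - ⟨v_i, v_j⟩) over all families of unit vectors satisfying the constraints ⟨v_i, v_j⟩ ≥ -1/(k-1) for i ≠ j. -/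
open scoped RealInnerProductSpace
open Finset

/-!
Place point `i` at the vertex `a (σ i)` of a regular simplex `a` of unit vectors in `ℝ^{k-1}`.
Since `((k-1)/k) (1 - ⟪a x, a y⟫)` is `0` for `x = y` and `1` otherwise, the relaxed objective of
this family is exactly the cut value of `σ`. For the comparison with `sSup`, the relaxed objective
of any family of unit vectors is at most `((k-1)/k) ∑ 2 |w p|`, so the set is bounded above and
`sSup` is its true supremum rather than the junk value.
-/

section

variable {E F : Type*} [NormedAddCommGroup E] [InnerProductSpace ℝ E]
  [NormedAddCommGroup F] [InnerProductSpace ℝ F]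

theorem sum_mul_one_sub_inner_le {ι : Type*} (s : Finset (ι × ι)) (w : ι × ι → ℝ)
    {v : ι → E} (hv : ∀ i, ‖v i‖ = 1) :
    ∑ p ∈ s, w p * (1 - ⟪v p.1, v p.2⟫) ≤ ∑ p ∈ s, |w p| * 2 := by
  refine sum_le_sum fun p _ => ?_
  have h : |⟪v p.1, v p.2⟫| ≤ 1 := by
    simpa [hv] using abs_real_inner_le_norm (v p.1) (v p.2)
  calc w p * (1 - ⟪v p.1, v p.2⟫) ≤ |w p| * |1 - ⟪v p.1, v p.2⟫| := by
        rw [← abs_mul]; exact le_abs_self _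
    _ ≤ |w p| * 2 := by
        gcongr
        exact (abs_sub _ _).trans (by rw [abs_one]; linarith)

structure IsCenteredRegularSimplex {k : ℕ} (a : Fin k → E) : Prop where
  norm_eq_one : ∀ j, ‖a j‖ = 1
  inner_eq : ∀ i j, i ≠ j → ⟪a i, a j⟫ = -1 / ((k : ℝ) - 1)

namespace IsCenteredRegularSimplex

variable {k : ℕ} {a : Fin k → E}

theorem of_inner_eq_ite (h : ∀ i j, ⟪a i, a j⟫ = if i = j then 1 else -1 / ((k : ℝ) - 1)) :
    IsCenteredRegularSimplex a where
  norm_eq_one j := by rw [norm_eq_sqrt_real_inner, h, if_pos rfl, Real.sqrt_one]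
  inner_eq i j hij := by rw [h, if_neg hij]

theorem inner_self (ha : IsCenteredRegularSimplex a) (j : Fin k) : ⟪a j, a j⟫ = 1 := by
  rw [real_inner_self_eq_norm_sq, ha.norm_eq_one, one_pow]

theorem neg_one_div_le_inner (ha : IsCenteredRegularSimplex a) (i j : Fin k) :
    -1 / ((k : ℝ) - 1) ≤ ⟪a i, a j⟫ := by
  obtain rfl | hij := eq_or_ne i j
  · have hk : (1 : ℝ) ≤ k := by exact_mod_cast i.pos
    rw [ha.inner_self]
    exact (div_nonpos_of_nonpos_of_nonneg (by norm_num) (by linarith)).trans zero_le_one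
  · exact (ha.inner_eq i j hij).ge

theorem mul_one_sub_inner (ha : IsCenteredRegularSimplex a) (i j : Fin k) :
    ((k : ℝ) - 1) / k * (1 - ⟪a i, a j⟫) = if i = j then 0 else 1 := by
  obtain rfl | hij := eq_or_ne i j
  · rw [ha.inner_self, sub_self, mul_zero, if_pos rfl]
  · have hk : (2 : ℝ) ≤ k := by
      have : 2 ≤ k := by have := Fin.val_ne_of_ne hij; omega
      exact_mod_cast this
    have : (k : ℝ) - 1 ≠ 0 := by linarith
    rw [ha.inner_eq i j hij, if_neg hij]
    field_simp
    ring

theorem mul_sum_mul_one_sub_inner_comp (ha : IsCenteredRegularSimplex a) {ι : Type*}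
    (s : Finset (ι × ι)) (w : ι × ι → ℝ) (σ : ι → Fin k) :
    ((k : ℝ) - 1) / k * ∑ p ∈ s, w p * (1 - ⟪a (σ p.1), a (σ p.2)⟫)
      = ∑ p ∈ s with σ p.1 ≠ σ p.2, w p := by
  rw [mul_sum, sum_filter]
  refine sum_congr rfl fun p _ => ?_
  rw [mul_left_comm, ha.mul_one_sub_inner]
  by_cases h : σ p.1 = σ p.2 <;> simp [h]

theorem _root_.LinearIsometry.isCenteredRegularSimplex_comp_iff (f : E →ₗᵢ[ℝ] F) :
    IsCenteredRegularSimplex (f ∘ a) ↔ IsCenteredRegularSimplex a := by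
  constructor <;> rintro ⟨h₁, h₂⟩ <;> exact ⟨by simpa using h₁, by simpa using h₂⟩

end IsCenteredRegularSimplex

end

noncomputable def centeredSingle (k : ℕ) (j : Fin k) : EuclideanSpace ℝ (Fin k) :=
  EuclideanSpace.single j 1 - (k : ℝ)⁻¹ • WithLp.toLp 2 fun _ => 1

section

variable {k : ℕ}

theorem inner_single_one_ones (j : Fin k) :
    ⟪EuclideanSpace.single j (1 : ℝ), WithLp.toLp 2 fun _ => 1⟫ = 1 := by
  simp [EuclideanSpace.inner_single_left]

theorem inner_ones_ones :
    ⟪(WithLp.toLp 2 fun _ => 1 : EuclideanSpace ℝ (Fin k)), WithLp.toLp 2 fun _ => 1⟫ = k := by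
  rw [PiLp.inner_apply]
  simp

theorem inner_ones_centeredSingle (j : Fin k) :
    ⟪WithLp.toLp 2 fun _ => 1, centeredSingle k j⟫ = 0 := by
  have : (k : ℝ) ≠ 0 := by exact_mod_cast j.pos.ne'
  rw [centeredSingle, inner_sub_right, real_inner_comm, inner_single_one_ones,
    real_inner_smul_right, inner_ones_ones, inv_mul_cancel₀ this, sub_self]

theorem inner_centeredSingle (i j : Fin k) :
    ⟪centeredSingle k i, centeredSingle k j⟫ = (if i = j then 1 else 0) - (k : ℝ)⁻¹ := by
  conv_lhs => rw [centeredSingle]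
  rw [inner_sub_left, real_inner_smul_left, inner_ones_centeredSingle, mul_zero, sub_zero,
    EuclideanSpace.inner_single_left]
  simp [centeredSingle]

end

/-- Rescaled to unit length, the centred standard basis vectors form a regular simplex in the
hyperplane orthogonal to `(1, …, 1)`, which is isometric to `ℝ^{k-1}`. -/
theorem exists_isCenteredRegularSimplex_euclideanSpace {k : ℕ} (hk : 2 ≤ k) :
    ∃ a : Fin k → EuclideanSpace ℝ (Fin (k - 1)), IsCenteredRegularSimplex a := by
  have hk' : (2 : ℝ) ≤ k := by exact_mod_cast hk
  let u : EuclideanSpace ℝ (Fin k) := WithLp.toLp 2 fun _ => 1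
  have hu : u ≠ 0 := by
    rw [← inner_self_ne_zero (𝕜 := ℝ), inner_ones_ones]
    positivity
  let s := √((k : ℝ) / (k - 1))
  have hs : s * s = k / (k - 1) := Real.mul_self_sqrt (div_nonneg (by linarith) (by linarith))
  let b (j : Fin k) : EuclideanSpace ℝ (Fin k) := s • centeredSingle k j
  have hb : IsCenteredRegularSimplex b := by
    refine .of_inner_eq_ite fun i j => ?_
    have : (k : ℝ) - 1 ≠ 0 := by linarith
    rw [real_inner_smul_left, real_inner_smul_right, inner_centeredSingle, ← mul_assoc, hs]
    split_ifs
    · field_simp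
    · field_simp
      ring
  have hb_mem (j : Fin k) : b j ∈ (ℝ ∙ u)ᗮ := by
    rw [Submodule.mem_orthogonal_singleton_iff_inner_right, real_inner_smul_right,
      inner_ones_centeredSingle, mul_zero]
  have : Fact (Module.finrank ℝ (EuclideanSpace ℝ (Fin k)) = (k - 1) + 1) :=
    ⟨by rw [finrank_euclideanSpace, Fintype.card_fin]; omega⟩
  let φ := ((stdOrthonormalBasis ℝ (ℝ ∙ u)ᗮ).reindex
    (finCongr (Submodule.finrank_orthogonal_span_singleton (n := k - 1) hu))).repr
  refine ⟨fun j => φ ⟨b j, hb_mem j⟩, ?_⟩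
  show IsCenteredRegularSimplex (φ.toLinearIsometry ∘ fun j => (⟨b j, hb_mem j⟩ : (ℝ ∙ u)ᗮ))
  rw [φ.toLinearIsometry.isCenteredRegularSimplex_comp_iff,
    ← (ℝ ∙ u)ᗮ.subtypeₗᵢ.isCenteredRegularSimplex_comp_iff]
  exact hb

theorem cut_feasible_and_le_relaxation_general
    (k : ℕ) (hk : 2 ≤ k) (n : ℕ)
    (w : Fin n × Fin n → ℝ) (σ : Fin n → Fin k) :
    (∃ v : Fin n → EuclideanSpace ℝ (Fin (k - 1)),
      (∀ i, ‖v i‖ = 1) ∧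
      (∀ i j, i ≠ j → ⟪v i, v j⟫ ≥ -1 / ((k : ℝ) - 1)) ∧
      (((k : ℝ) - 1) / k) *
          (∑ p ∈ univ.filter (fun p : Fin n × Fin n => p.1 < p.2),
            w p * (1 - ⟪v p.1, v p.2⟫))
        = ∑ p ∈ univ.filter (fun p : Fin n × Fin n => p.1 < p.2 ∧ σ p.1 ≠ σ p.2), w p) ∧
    (∑ p ∈ univ.filter (fun p : Fin n × Fin n => p.1 < p.2 ∧ σ p.1 ≠ σ p.2), w p
      ≤ sSup {x : ℝ | ∃ v : Fin n → EuclideanSpace ℝ (Fin (k - 1)),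
          (∀ i, ‖v i‖ = 1) ∧
          (∀ i j, i ≠ j → ⟪v i, v j⟫ ≥ -1 / ((k : ℝ) - 1)) ∧
          x = (((k : ℝ) - 1) / k) *
            ∑ p ∈ univ.filter (fun p : Fin n × Fin n => p.1 < p.2),
              w p * (1 - ⟪v p.1, v p.2⟫)}) := by
  obtain ⟨a, ha⟩ := exists_isCenteredRegularSimplex_euclideanSpace hk
  have hnorm (i : Fin n) : ‖a (σ i)‖ = 1 := ha.norm_eq_one _
  have hfeas (i j : Fin n) (_ : i ≠ j) : ⟪a (σ i), a (σ j)⟫ ≥ -1 / ((k : ℝ) - 1) :=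
    ha.neg_one_div_le_inner _ _
  have hobj := ha.mul_sum_mul_one_sub_inner_comp (univ.filter fun p => p.1 < p.2) w σ
  rw [filter_filter] at hobj
  refine ⟨⟨fun i => a (σ i), hnorm, hfeas, hobj⟩, le_csSup ?_ ⟨_, hnorm, hfeas, hobj.symm⟩⟩
  have hk' : (1 : ℝ) ≤ k := by exact_mod_cast one_le_two.trans hk
  refine ⟨((k : ℝ) - 1) / k * ∑ p ∈ univ.filter (fun p : Fin n × Fin n => p.1 < p.2), |w p| * 2, ?_⟩
  rintro x ⟨v, hv, -, rfl⟩
  exact mul_le_mul_of_nonneg_left (sum_mul_one_sub_inner_le _ w hv)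
    (div_nonneg (by linarith) (by linarith))

/-- Every assignment `σ` gives a feasible solution of the SDP relaxation of Max k-Cut
with the same objective value; consequently every cut value is at most the supremum of
the relaxed objective over all feasible families of unit vectors. -/
theorem cut_feasible_and_le_relaxation
    (k : ℕ) (hk : 2 ≤ k) (n : ℕ) (hn : 1 ≤ n)
    (w : Fin n × Fin n → ℝ) (σ : Fin n → Fin k) :
    (∃ v : Fin n → EuclideanSpace ℝ (Fin (k - 1)),
      (∀ i, ‖v i‖ = 1) ∧
      (∀ i j, i ≠ j → ⟪v i, v j⟫ ≥ -1 / ((k : ℝ) - 1)) ∧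
      (((k : ℝ) - 1) / k) *
          (∑ p ∈ univ.filter (fun p : Fin n × Fin n => p.1 < p.2),
            w p * (1 - ⟪v p.1, v p.2⟫))
        = ∑ p ∈ univ.filter (fun p : Fin n × Fin n => p.1 < p.2 ∧ σ p.1 ≠ σ p.2), w p) ∧
    (∑ p ∈ univ.filter (fun p : Fin n × Fin n => p.1 < p.2 ∧ σ p.1 ≠ σ p.2), w p
      ≤ sSup {x : ℝ | ∃ v : Fin n → EuclideanSpace ℝ (Fin (k - 1)),
          (∀ i, ‖v i‖ = 1) ∧
          (∀ i j, i ≠ j → ⟪v i, v j⟫ ≥ -1 / ((k : ℝ) - 1)) ∧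
          x = (((k : ℝ) - 1) / k) *
            ∑ p ∈ univ.filter (fun p : Fin n × Fin n => p.1 < p.2),
              w p * (1 - ⟪v p.1, v p.2⟫)}) :=
  cut_feasible_and_le_relaxation_general k hk n w σ
end
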